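/- arXiv:1609.09792 — 4 statements merged into one kernel-verified Lean document; each statement's English description precedes it below -/
import Mathlib

section
/- For every β ∈ ℕ, the coefficient of y^β in δ(g)(x,y), viewed as a polynomial in y with coefficients in ℂ[x], is congruent modulo f to g(x) times the coefficient of y^β in δ(1)(x,y). -/
/-- Working in `ℂ[x][y]` (so `x = C X` and `y = X`), with `δ(g)` defined by
`(x−y)δ(g) = f(x)g(y) − f(y)g(x)` and `δ(1)` by `(x−y)δ(1) = f(x) − f(y)`,
every `y^β`-coefficient of `δ(g)` is congruent mod `f` to `g` times the
corresponding coefficient of `δ(1)`. -/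
theorem bezoutPoly_coeff_modEq (f g : Polynomial ℂ)
    (δg δ1 : Polynomial (Polynomial ℂ))
    (hδg : (Polynomial.C Polynomial.X - Polynomial.X) * δg =
      Polynomial.C f * g.map Polynomial.C - f.map Polynomial.C * Polynomial.C g)
    (hδ1 : (Polynomial.C Polynomial.X - Polynomial.X) * δ1 =
      Polynomial.C f - f.map Polynomial.C) :
    ∀ β : ℕ, f ∣ δg.coeff β - g * δ1.coeff β := by
  intro β
  set π := Ideal.Quotient.mk (Ideal.span {f}) with hπ
  have hE : (Polynomial.C Polynomial.X - Polynomial.X) *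
      (δg - Polynomial.C g * δ1) =
      Polynomial.C f * (g.map Polynomial.C - Polynomial.C g) := by
    linear_combination hδg - Polynomial.C g * hδ1
  have hmap := congrArg (Polynomial.map π) hE
  have hf0 : π f = 0 := by
    rw [hπ, Ideal.Quotient.eq_zero_iff_mem]
    exact Ideal.subset_span rfl
  simp only [Polynomial.map_mul, Polynomial.map_sub, Polynomial.map_C, hf0,
    Polynomial.C_0, zero_mul, Polynomial.map_X] at hmap
  have hzero : (δg - Polynomial.C g * δ1).map π = 0 := by
    have hm : (Polynomial.X - Polynomial.C (π Polynomial.X)).Monic :=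
      Polynomial.monic_X_sub_C _
    have : (Polynomial.X - Polynomial.C (π Polynomial.X)) *
        ((δg - Polynomial.C g * δ1).map π) = 0 := by
      rw [Polynomial.map_sub, Polynomial.map_mul, Polynomial.map_C]
      linear_combination -hmap
    exact hm.mul_right_eq_zero_iff.mp this
  have hc := congrArg (fun p => Polynomial.coeff p β) hzero
  simp only [Polynomial.coeff_map, Polynomial.coeff_zero] at hc
  rw [Polynomial.coeff_sub, Polynomial.coeff_C_mul, map_sub, map_mul] at hc
  have : π (δg.coeff β - g * δ1.coeff β) = 0 := by
    rw [map_sub, map_mul]; linear_combination hc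
  rw [hπ, Ideal.Quotient.eq_zero_iff_mem, Ideal.mem_span_singleton] at this
  exact this
end

section
/- Barnett's formula: for a monic (or a_0 ≠ 0) polynomial f of degree d, the companion matrix X satisfies X = B(x)·B(1)^{-1}, where B(1) and B(x) are the d×d Bezout matrices of 1 and x with respect to f. -/
open MvPolynomial

namespace BarnettAux

open Finset

noncomputable def bmu (a b : ℕ) : Fin 2 →₀ ℕ :=
  Finsupp.single 0 a + Finsupp.single 1 b

lemma bmu_apply0 (a b : ℕ) : bmu a b 0 = a := by
  simp [bmu, Finsupp.single_apply, Fin.ext_iff]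

lemma bmu_apply1 (a b : ℕ) : bmu a b 1 = b := by
  simp [bmu, Finsupp.single_apply, Fin.ext_iff]

lemma bmu_eq_iff {a b a' b' : ℕ} : bmu a b = bmu a' b' ↔ a = a' ∧ b = b' := by
  constructor
  · intro h
    exact ⟨by rw [← bmu_apply0 a b, h, bmu_apply0],
      by rw [← bmu_apply1 a b, h, bmu_apply1]⟩
  · rintro ⟨rfl, rfl⟩; rfl

lemma mono_eq (a b : ℕ) :
    (X 0 : MvPolynomial (Fin 2) ℂ) ^ a * X 1 ^ b = monomial (bmu a b) 1 := by
  rw [X_pow_eq_monomial, X_pow_eq_monomial, monomial_mul, one_mul, bmu]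

lemma coeff_term (a b α β : ℕ) (c : ℂ) :
    coeff (bmu a b) (C c * X 0 ^ α * X 1 ^ β) =
      if α = a ∧ β = b then c else 0 := by
  rw [mul_assoc, mono_eq, coeff_C_mul, coeff_monomial]
  simp [bmu_eq_iff]

lemma coeff_doubleSum {d : ℕ} (M : Fin d → Fin d → ℂ) (a b : Fin d) :
    coeff (bmu a b) (∑ α : Fin d, ∑ β : Fin d,
      C (M α β) * X 0 ^ (α : ℕ) * X 1 ^ (β : ℕ)) = M a b := by
  rw [coeff_sum]
  simp_rw [coeff_sum, coeff_term]
  rw [Finset.sum_eq_single a, Finset.sum_eq_single b]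
  · simp
  · intro β _ hβ
    simp [Fin.val_eq_val, hβ]
  · simp
  · intro α _ hα
    apply Finset.sum_eq_zero
    intro β _
    simp [Fin.val_eq_val, hα]
  · simp

lemma coeff_geom_part (c : ℂ) (k a b : ℕ) :
    coeff (bmu a b) (C c * ∑ i ∈ range k, (X 0 : MvPolynomial (Fin 2) ℂ) ^ i * X 1 ^ (k - 1 - i)) =
      if k = a + b + 1 then c else 0 := by
  rw [coeff_C_mul, coeff_sum]
  simp_rw [mono_eq, coeff_monomial]
  by_cases hk : k = a + b + 1
  · subst hk
    rw [Finset.sum_eq_single_of_mem a (by simp [Finset.mem_range])]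
    · rw [if_pos, if_pos rfl, mul_one]
      rw [bmu_eq_iff]; omega
    · intro i _ hi
      rw [if_neg]
      rw [bmu_eq_iff]; omega
  · rw [if_neg hk]
    rw [Finset.sum_eq_zero, mul_zero]
    intro i hi
    rw [Finset.mem_range] at hi
    rw [if_neg]
    rw [bmu_eq_iff]; omega

lemma delta1_eq (f : Polynomial ℂ) :
    (X 0 - X 1) * (∑ k ∈ range (f.natDegree + 1),
        C (f.coeff k) * ∑ i ∈ range k, (X 0 : MvPolynomial (Fin 2) ℂ) ^ i * X 1 ^ (k - 1 - i)) =
      Polynomial.aeval (X 0) f - Polynomial.aeval (X 1) f := by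
  rw [Finset.mul_sum]
  rw [Polynomial.aeval_eq_sum_range, Polynomial.aeval_eq_sum_range, ← Finset.sum_sub_distrib]
  apply Finset.sum_congr rfl
  intro k _
  rw [mul_left_comm, (Commute.all _ _).mul_geom_sum₂]
  simp [smul_eq_C_mul, mul_sub]

lemma coeff_aeval (f : Polynomial ℂ) (a b : ℕ) (hb : a ≤ f.natDegree) :
    coeff (bmu a b) (Polynomial.aeval (X 0 : MvPolynomial (Fin 2) ℂ) f) =
      if b = 0 then f.coeff a else 0 := by
  rw [Polynomial.aeval_eq_sum_range, coeff_sum]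
  have key : ∀ k : ℕ, coeff (bmu a b) (f.coeff k • (X 0 : MvPolynomial (Fin 2) ℂ) ^ k) =
      if k = a ∧ b = 0 then f.coeff k else 0 := by
    intro k
    have hX : (X 0 : MvPolynomial (Fin 2) ℂ) ^ k = C 1 * X 0 ^ k * X 1 ^ 0 := by
      rw [map_one, one_mul, pow_zero, mul_one]
    rw [coeff_smul, hX, coeff_term]
    by_cases h : k = a ∧ 0 = b
    · rw [if_pos h, if_pos ⟨h.1, h.2.symm⟩, smul_eq_mul, mul_one]
    · rw [if_neg h, if_neg, smul_eq_mul, mul_zero]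
      intro h'; exact h ⟨h'.1, h'.2.symm⟩
  simp_rw [key]
  by_cases hb0 : b = 0
  · subst hb0
    simp only [and_true, if_true]
    rw [Finset.sum_ite_eq' (range (f.natDegree + 1)) a, if_pos (by simp [Finset.mem_range]; omega)]
  · simp [hb0]

end BarnettAux

open BarnettAux

/-- The companion matrix of `f = a_0 x^d + ⋯ + a_d`: 1's on the subdiagonal and
last column `(-a_d/a_0, …, -a_1/a_0)ᵀ`. -/
noncomputable def companionMatrix (f : Polynomial ℂ) :
    Matrix (Fin f.natDegree) (Fin f.natDegree) ℂ :=
  Matrix.of fun i j =>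
    if (j : ℕ) = f.natDegree - 1 then -f.coeff i / f.leadingCoeff
    else if (i : ℕ) = (j : ℕ) + 1 then 1 else 0

/-- Barnett's formula: `X = B(x)·B(1)⁻¹`, where `B(1)` and `B(x)` are the `d×d`
Bezout matrices of `1` and `x` with respect to `f`. -/
theorem barnett_formula (f : Polynomial ℂ) (hf : f.leadingCoeff ≠ 0)
    (δ1 δx : MvPolynomial (Fin 2) ℂ)
    (hδ1 : (X 0 - X 1) * δ1 = Polynomial.aeval (X 0) f - Polynomial.aeval (X 1) f)
    (hδx : (X 0 - X 1) * δx =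
      Polynomial.aeval (X 0) f * X 1 - Polynomial.aeval (X 1) f * X 0)
    (B1 Bx : Matrix (Fin f.natDegree) (Fin f.natDegree) ℂ)
    (hB1 : δ1 = ∑ α : Fin f.natDegree, ∑ β : Fin f.natDegree,
      MvPolynomial.C (B1 α β) * X 0 ^ (α : ℕ) * X 1 ^ (β : ℕ))
    (hBx : δx = ∑ α : Fin f.natDegree, ∑ β : Fin f.natDegree,
      MvPolynomial.C (Bx α β) * X 0 ^ (α : ℕ) * X 1 ^ (β : ℕ)) :
    companionMatrix f = Bx * B1⁻¹ := by
  by_cases hd0 : f.natDegree = 0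
  · ext i j
    exact absurd i.2 (by omega)
  have hd1 : 1 ≤ f.natDegree := by omega
  have hX : (X 0 : MvPolynomial (Fin 2) ℂ) - X 1 ≠ 0 := by
    rw [sub_ne_zero]
    exact fun h => absurd (MvPolynomial.X_injective h) (by decide)
  have hδ1g : δ1 = ∑ k ∈ Finset.range (f.natDegree + 1),
      C (f.coeff k) * ∑ i ∈ Finset.range k,
        (X 0 : MvPolynomial (Fin 2) ℂ) ^ i * X 1 ^ (k - 1 - i) :=
    mul_left_cancel₀ hX (hδ1.trans (delta1_eq f).symm)
  have hB1e : ∀ a b : Fin f.natDegree, B1 a b = f.coeff ((a : ℕ) + (b : ℕ) + 1) := by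
    intro a b
    have h1 : coeff (bmu a b) δ1 = B1 a b := by rw [hB1]; exact coeff_doubleSum B1 a b
    rw [← h1, hδ1g, coeff_sum]
    simp_rw [coeff_geom_part]
    rw [Finset.sum_ite_eq' (Finset.range (f.natDegree + 1)) ((a : ℕ) + (b : ℕ) + 1)]
    by_cases h : (a : ℕ) + (b : ℕ) + 1 ∈ Finset.range (f.natDegree + 1)
    · rw [if_pos h]
    · rw [if_neg h, eq_comm, Polynomial.coeff_eq_zero_of_natDegree_lt]
      rw [Finset.mem_range] at h; omega
  have hδxe : δx = X 0 * δ1 - Polynomial.aeval (X 0) f := by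
    apply mul_left_cancel₀ hX
    rw [hδx]
    linear_combination (-(X 0 : MvPolynomial (Fin 2) ℂ)) * hδ1
  have hBxe : ∀ a b : Fin f.natDegree, Bx a b =
      (if 1 ≤ (a : ℕ) then f.coeff ((a : ℕ) + (b : ℕ)) else 0) -
      (if (b : ℕ) = 0 then f.coeff a else 0) := by
    intro a b
    have h1 : coeff (bmu a b) δx = Bx a b := by rw [hBx]; exact coeff_doubleSum Bx a b
    rw [← h1, hδxe, coeff_sub, coeff_aeval f a b (by omega)]
    congr 1
    rw [coeff_X_mul']
    by_cases ha : 1 ≤ (a : ℕ)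
    · rw [if_pos, if_pos ha]
      · have hsub : bmu a b - Finsupp.single 0 1 = bmu ((a : ℕ) - 1) b := by
          ext j
          rw [Finsupp.tsub_apply]
          fin_cases j <;> simp [bmu, Finsupp.single_apply, Fin.ext_iff]
        rw [hsub]
        have hlt : (a : ℕ) - 1 < f.natDegree := by omega
        have h2 := coeff_doubleSum B1 ⟨(a : ℕ) - 1, hlt⟩ b
        rw [← hB1] at h2
        rw [show ((⟨(a : ℕ) - 1, hlt⟩ : Fin f.natDegree) : ℕ) = (a : ℕ) - 1 from rfl] at h2
        rw [h2, hB1e]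
        simp only [Fin.val_mk]
        congr 1
        omega
      · rw [Finsupp.mem_support_iff, bmu_apply0]
        omega
    · rw [if_neg ha, if_neg]
      rw [Finsupp.mem_support_iff, bmu_apply0]
      omega
  -- invertibility of B1
  have hdet : IsUnit B1.det := by
    have hN : (B1.submatrix ⇑(Fin.revPerm : Equiv.Perm (Fin f.natDegree)) id).det =
        f.leadingCoeff ^ f.natDegree := by
      rw [Matrix.det_of_lowerTriangular]
      · have hdiag : ∀ i : Fin f.natDegree,
            (B1.submatrix ⇑(Fin.revPerm : Equiv.Perm (Fin f.natDegree)) id) i i =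
              f.leadingCoeff := by
          intro i
          simp only [Matrix.submatrix_apply, id_eq, Fin.revPerm_apply]
          rw [hB1e]
          have hrev : ((i.rev : ℕ) + (i : ℕ) + 1) = f.natDegree := by
            rw [Fin.val_rev]; omega
          rw [hrev, Polynomial.coeff_natDegree]
        rw [Finset.prod_congr rfl (fun i _ => hdiag i), Finset.prod_const,
          Finset.card_univ, Fintype.card_fin]
      · intro i j hij
        have hij' : (i : ℕ) < (j : ℕ) := hij
        simp only [Matrix.submatrix_apply, id_eq, Fin.revPerm_apply]
        rw [hB1e]
        apply Polynomial.coeff_eq_zero_of_natDegree_lt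
        rw [Fin.val_rev]
        omega
    rw [Matrix.det_permute] at hN
    rw [isUnit_iff_ne_zero]
    intro h0
    rw [h0, mul_zero] at hN
    exact pow_ne_zero f.natDegree hf hN.symm
  -- companion * B1 = Bx
  have hCB : companionMatrix f * B1 = Bx := by
    ext i β
    rw [Matrix.mul_apply]
    have key : ∀ j : Fin f.natDegree, companionMatrix f i j * B1 j β =
        (if j = (⟨f.natDegree - 1, by omega⟩ : Fin f.natDegree) then
          -f.coeff i / f.leadingCoeff * f.coeff (f.natDegree + (β : ℕ)) else 0) +
        (if 1 ≤ (i : ℕ) ∧ (j : ℕ) = (i : ℕ) - 1 then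
          f.coeff ((i : ℕ) + (β : ℕ)) else 0) := by
      intro j
      rw [hB1e]
      simp only [companionMatrix, Matrix.of_apply]
      by_cases h1 : (j : ℕ) = f.natDegree - 1
      · have h1' : j = (⟨f.natDegree - 1, by omega⟩ : Fin f.natDegree) := Fin.ext h1
        have hnot : ¬ (1 ≤ (i : ℕ) ∧ (j : ℕ) = (i : ℕ) - 1) := by
          rintro ⟨hi1, hji⟩; omega
        rw [if_pos h1, if_pos h1', if_neg hnot, add_zero]
        have e : (j : ℕ) + (β : ℕ) + 1 = f.natDegree + (β : ℕ) := by omega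
        rw [e]
      · have h1' : j ≠ (⟨f.natDegree - 1, by omega⟩ : Fin f.natDegree) := by
          intro h; exact h1 (by rw [h])
        rw [if_neg h1, if_neg h1', zero_add]
        by_cases h2 : (i : ℕ) = (j : ℕ) + 1
        · have hc : 1 ≤ (i : ℕ) ∧ (j : ℕ) = (i : ℕ) - 1 := ⟨by omega, by omega⟩
          rw [if_pos h2, if_pos hc, one_mul]
          have e : (j : ℕ) + (β : ℕ) + 1 = (i : ℕ) + (β : ℕ) := by omega
          rw [e]
        · have hnot : ¬ (1 ≤ (i : ℕ) ∧ (j : ℕ) = (i : ℕ) - 1) := by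
            rintro ⟨hi1, hji⟩; exact h2 (by omega)
          rw [if_neg h2, if_neg hnot, zero_mul]
    simp_rw [key]
    rw [Finset.sum_add_distrib, Finset.sum_ite_eq' Finset.univ, if_pos (Finset.mem_univ _)]
    have e2 : ∑ j : Fin f.natDegree, (if 1 ≤ (i : ℕ) ∧ (j : ℕ) = (i : ℕ) - 1 then
        f.coeff ((i : ℕ) + (β : ℕ)) else 0) =
        if 1 ≤ (i : ℕ) then f.coeff ((i : ℕ) + (β : ℕ)) else 0 := by
      by_cases hi : 1 ≤ (i : ℕ)
      · rw [if_pos hi]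
        have hlt : (i : ℕ) - 1 < f.natDegree := by omega
        rw [Finset.sum_eq_single_of_mem (⟨(i : ℕ) - 1, hlt⟩ : Fin f.natDegree)
          (Finset.mem_univ _)]
        · rw [if_pos ⟨hi, rfl⟩]
        · intro j _ hj
          rw [if_neg]
          rintro ⟨-, hj'⟩
          exact hj (by rw [Fin.ext_iff]; exact hj')
      · rw [if_neg hi]
        apply Finset.sum_eq_zero
        intro j _
        rw [if_neg (fun h => hi h.1)]
    rw [e2, hBxe]
    have e1 : -f.coeff i / f.leadingCoeff * f.coeff (f.natDegree + (β : ℕ)) =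
        -(if (β : ℕ) = 0 then f.coeff i else 0) := by
      by_cases hb : (β : ℕ) = 0
      · rw [if_pos hb, hb, Nat.add_zero, Polynomial.coeff_natDegree,
          neg_div, neg_mul, div_mul_cancel₀ _ hf]
      · have hz : f.coeff (f.natDegree + (β : ℕ)) = 0 :=
          Polynomial.coeff_eq_zero_of_natDegree_lt (by omega)
        rw [if_neg hb, hz, mul_zero, neg_zero]
    rw [e1]
    ring
  rw [← hCB, Matrix.mul_nonsing_inv_cancel_right _ _ hdet]
end

section
/- Generalized Barnett formula: if f has degree d with nonzero leading coefficient and g is a polynomial of degree ≤ d, then B(g)·B(1)^{-1} = g(X), where X is the companion matrix of f and B(1), B(g) are the Bezout matrices of 1 and g written in the monomial index sets of size max(d, deg g) = d. -/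
open MvPolynomial

/-!
Write `v(t) = (1, t, …, t^(d-1))` and `f_k` for the coefficient of `x^k` in `f`. The last column
of the companion matrix `A` makes `v(x)ᵀ A ≡ x v(x)ᵀ` modulo `f(x)`, hence
`v(x)ᵀ g(A) ≡ g(x) v(x)ᵀ`. Pairing with `B(1) v(y)` gives
`v(x)ᵀ g(A) B(1) v(y) ≡ g(x) (f(x) - f(y))/(x - y)`, which differs from
`(f(x) g(y) - f(y) g(x))/(x - y) = v(x)ᵀ B(g) v(y)` by `f(x) (g(x) - g(y))/(x - y)`.
So `f(x)` divides `v(x)ᵀ (g(A) B(1) - B(g)) v(y)`, whose degree in `x` is below `d = deg f`;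
hence `B(g) = g(A) B(1)`. Finally `B(1) = (f_(α+β+1))` is a Hankel matrix vanishing below its
antidiagonal, which carries the leading coefficient, so it is invertible.
-/

open Matrix Finset

def powVec {S : Type*} [Monoid S] (d : ℕ) (t : S) : Fin d → S := fun j => t ^ (j : ℕ)

section Bivariate

variable {R : Type*} [CommRing R]

lemma coeff_single_aeval_X {σ : Type*} (i : σ) (p : Polynomial R) (n : ℕ) :
    coeff (Finsupp.single i n) (Polynomial.aeval (X i : MvPolynomial σ R) p) = p.coeff n := by
  classical
  simp only [Polynomial.aeval_eq_sum_range, coeff_sum, coeff_smul, coeff_X_pow,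
    (Finsupp.single_injective i).eq_iff, smul_eq_mul, mul_ite, mul_one, mul_zero, sum_ite_eq']
  split_ifs with h
  · rfl
  · exact (Polynomial.coeff_eq_zero_of_natDegree_lt (by simpa using h)).symm

lemma natDegree_le_degreeOf_aeval_X {σ : Type*} (i : σ) (p : Polynomial R) :
    p.natDegree ≤ degreeOf i (Polynomial.aeval (X i : MvPolynomial σ R) p) := by
  rcases eq_or_ne p 0 with rfl | hp
  · simp
  simpa using le_degreeOf_of_mem_support i (s := Finsupp.single i p.natDegree)
    (by rw [mem_support_iff, coeff_single_aeval_X]; exact Polynomial.leadingCoeff_ne_zero.2 hp)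

variable {d : ℕ}

noncomputable def bilinearPoly (M : Matrix (Fin d) (Fin d) R) : MvPolynomial (Fin 2) R :=
  ∑ α : Fin d, ∑ β : Fin d, C (M α β) * X 0 ^ (α : ℕ) * X 1 ^ (β : ℕ)

lemma bilinearPoly_eq_dotProduct (M : Matrix (Fin d) (Fin d) R) :
    bilinearPoly M = powVec d (X 0) ⬝ᵥ (M.map (algebraMap R _) *ᵥ powVec d (X 1)) := by
  simp only [bilinearPoly, powVec, dotProduct, mulVec, map_apply, algebraMap_eq, mul_sum]
  exact sum_congr rfl fun α _ => sum_congr rfl fun β _ => by ring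

lemma bilinearPoly_sub (M N : Matrix (Fin d) (Fin d) R) :
    bilinearPoly (M - N) = bilinearPoly M - bilinearPoly N := by
  simp only [bilinearPoly, Matrix.sub_apply, map_sub, sub_mul, sum_sub_distrib]

lemma coeff_bilinearPoly (M : Matrix (Fin d) (Fin d) R) (a b : Fin d) :
    coeff (Finsupp.single 0 (a : ℕ) + Finsupp.single 1 (b : ℕ)) (bilinearPoly M) = M a b := by
  have hmono : ∀ α β : Fin d,
      C (M α β) * (X 0 : MvPolynomial (Fin 2) R) ^ (α : ℕ) * X 1 ^ (β : ℕ) =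
        monomial (Finsupp.single 0 (α : ℕ) + Finsupp.single 1 (β : ℕ)) (M α β) := by
    intro α β
    rw [C_mul_X_pow_eq_monomial, X_pow_eq_monomial, monomial_mul, mul_one]
  have hexp : ∀ α β : Fin d, Finsupp.single (0 : Fin 2) (α : ℕ) + Finsupp.single 1 (β : ℕ) =
      Finsupp.single 0 (a : ℕ) + Finsupp.single 1 (b : ℕ) ↔ α = a ∧ β = b := by
    refine fun α β => ⟨fun h => ?_, fun ⟨hα, hβ⟩ => hα ▸ hβ ▸ rfl⟩
    have h0 := DFunLike.congr_fun h 0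
    have h1 := DFunLike.congr_fun h 1
    simp only [Finsupp.add_apply, Finsupp.single_apply, ↓reduceIte, one_ne_zero, zero_ne_one,
      add_zero, zero_add] at h0 h1
    exact ⟨Fin.ext h0, Fin.ext h1⟩
  simp [bilinearPoly, hmono, coeff_sum, coeff_monomial, hexp, ite_and]

lemma bilinearPoly_injective : Function.Injective (bilinearPoly (R := R) (d := d)) := by
  intro M N h
  ext a b
  rw [← coeff_bilinearPoly M, h, coeff_bilinearPoly]

lemma degreeOf_bilinearPoly_le (M : Matrix (Fin d) (Fin d) R) :
    degreeOf 0 (bilinearPoly M) ≤ d - 1 := by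
  rcases subsingleton_or_nontrivial R with hR | hR
  · simp [Subsingleton.elim (bilinearPoly M) 0]
  refine (degreeOf_sum_le _ _ _).trans (Finset.sup_le fun α _ => ?_)
  refine (degreeOf_sum_le _ _ _).trans (Finset.sup_le fun β _ => ?_)
  refine (degreeOf_mul_le _ _ _).trans ?_
  rw [degreeOf_X_pow_of_ne _ (by decide), add_zero]
  refine (degreeOf_C_mul_le _ _ _).trans ?_
  refine (degreeOf_pow_le _ _ _).trans ?_
  rw [degreeOf_X_self, mul_one]
  omega

lemma eq_zero_of_aeval_X_dvd_bilinearPoly [IsDomain R] {p : Polynomial R} (hp : p ≠ 0)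
    (hd : d ≤ p.natDegree) {M : Matrix (Fin d) (Fin d) R}
    (h : Polynomial.aeval (X 0) p ∣ bilinearPoly M) : M = 0 := by
  rcases Nat.eq_zero_or_pos d with rfl | hd0
  · ext a
    exact a.elim0
  suffices hM : bilinearPoly M = 0 by
    ext a b
    rw [Matrix.zero_apply, ← coeff_bilinearPoly M a b, hM, coeff_zero]
  obtain ⟨u, hu⟩ := h
  by_contra hM
  have hu0 : u ≠ 0 := by rintro rfl; exact hM (by rw [hu, mul_zero])
  have hpX : Polynomial.aeval (X 0 : MvPolynomial (Fin 2) R) p ≠ 0 :=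
    (map_ne_zero_iff _ (Polynomial.toMvPolynomial_injective 0)).2 hp
  have := degreeOf_bilinearPoly_le M
  rw [hu, degreeOf_mul_eq hpX hu0] at this
  have := natDegree_le_degreeOf_aeval_X (0 : Fin 2) p
  omega

noncomputable def hankel (p : Polynomial R) (d : ℕ) : Matrix (Fin d) (Fin d) R :=
  of fun α β => p.coeff ((α : ℕ) + β + 1)

lemma sum_sum_ite_eq_geom_sum₂ {S : Type*} [CommRing S] (x y : S) {d k : ℕ} (hk : k ≤ d) :
    ∑ α : Fin d, ∑ β : Fin d, (if (α : ℕ) + β + 1 = k then x ^ (α : ℕ) * y ^ (β : ℕ) else 0) =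
      ∑ i ∈ range k, x ^ i * y ^ (k - 1 - i) := by
  have inner : ∀ α : ℕ, ∑ β : Fin d, (if α + β + 1 = k then x ^ α * y ^ (β : ℕ) else 0) =
      if α < k then x ^ α * y ^ (k - 1 - α) else 0 := by
    intro α
    rw [Fin.sum_univ_eq_sum_range (fun β => if α + β + 1 = k then x ^ α * y ^ β else 0)]
    split_ifs with h
    · rw [sum_eq_single (k - 1 - α)]
      · simp only [show α + (k - 1 - α) + 1 = k by omega, if_true]
      · exact fun β _ hβ => if_neg (by omega)
      · exact fun h' => absurd (mem_range.2 (by omega)) h'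
    · exact sum_eq_zero fun β _ => if_neg (by omega)
  simp only [inner]
  rw [Fin.sum_univ_eq_sum_range (fun α => if α < k then x ^ α * y ^ (k - 1 - α) else 0),
    ← sum_filter]
  congr 1
  ext i
  simp only [mem_filter, mem_range]
  omega

lemma aeval_X_sub_aeval_X (p : Polynomial R) (hp : p.natDegree ≤ d) :
    Polynomial.aeval (X 0) p - Polynomial.aeval (X 1) p =
      (X 0 - X 1 : MvPolynomial (Fin 2) R) * bilinearPoly (hankel p d) := by
  set x : MvPolynomial (Fin 2) R := X 0
  set y : MvPolynomial (Fin 2) R := X 1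
  have hp' : p.natDegree < d + 1 := Nat.lt_succ_of_le hp
  calc Polynomial.aeval x p - Polynomial.aeval y p
      = ∑ k ∈ range (d + 1), C (p.coeff k) * (x ^ k - y ^ k) := by
        simp only [Polynomial.aeval_eq_sum_range' hp', ← sum_sub_distrib, Algebra.smul_def,
          algebraMap_eq, mul_sub]
    _ = (x - y) * ∑ k ∈ range (d + 1), C (p.coeff k) * ∑ α : Fin d, ∑ β : Fin d,
          (if (α : ℕ) + β + 1 = k then x ^ (α : ℕ) * y ^ (β : ℕ) else 0) := by
        rw [mul_sum]
        refine sum_congr rfl fun k hk => ?_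
        rw [sum_sum_ite_eq_geom_sum₂ x y (Nat.lt_succ_iff.1 (mem_range.1 hk)), ← geom_sum₂_mul]
        ring
    _ = (x - y) * bilinearPoly (hankel p d) := by
        congr 1
        simp only [bilinearPoly, hankel, of_apply, mul_sum]
        rw [sum_comm]
        refine sum_congr rfl fun α _ => ?_
        rw [sum_comm]
        refine sum_congr rfl fun β _ => ?_
        simp only [mul_ite, mul_zero]
        rw [sum_ite_eq (range (d + 1)) ((α : ℕ) + β + 1)]
        split_ifs with h
        · ring
        · rw [Polynomial.coeff_eq_zero_of_natDegree_lt (by rw [mem_range] at h; omega), map_zero,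
            zero_mul, zero_mul]

lemma isUnit_det_hankel {p : Polynomial R} (hp : IsUnit p.leadingCoeff) :
    IsUnit (hankel p p.natDegree).det := by
  set d := p.natDegree
  have hrev : ∀ i : Fin d, ((Fin.revPerm i : Fin d) : ℕ) = d - (i + 1) := fun i => Fin.val_rev i
  have htri : ((hankel p d).submatrix Fin.revPerm id).IsLowerTriangular := by
    intro i j hij
    have hij' : (i : ℕ) < j := hij
    simp only [submatrix_apply, id, hankel, of_apply, hrev]
    exact Polynomial.coeff_eq_zero_of_natDegree_lt (by omega)
  have hdiag : ∀ i, (hankel p d).submatrix Fin.revPerm id i i = p.leadingCoeff := by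
    intro i
    simp only [submatrix_apply, id, hankel, of_apply, hrev, Polynomial.leadingCoeff]
    congr 1
    omega
  have h := det_permute Fin.revPerm (hankel p d)
  rw [det_of_isLowerTriangular _ htri, prod_congr rfl fun i _ => hdiag i, prod_const,
    card_univ, Fintype.card_fin] at h
  exact isUnit_of_mul_isUnit_right (h ▸ hp.pow d)

end Bivariate

lemma exists_vecMul_aeval_eq {K S n : Type*} [CommRing K] [CommRing S] [Algebra K S] [Fintype n]
    [DecidableEq n] {A : Matrix n n S} {v w : n → S} {t a : S} (h : v ᵥ* A = t • v + a • w)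
    (g : Polynomial K) : ∃ r, v ᵥ* Polynomial.aeval A g = Polynomial.aeval t g • v + a • r := by
  induction g using Polynomial.induction_on with
  | C c => exact ⟨0, by simp [Algebra.algebraMap_eq_smul_one, vecMul_smul]⟩
  | add p q hp hq =>
    obtain ⟨r, hr⟩ := hp
    obtain ⟨r', hr'⟩ := hq
    exact ⟨r + r', by rw [map_add, vecMul_add, hr, hr', map_add]; module⟩
  | monomial k c hk =>
    obtain ⟨r, hr⟩ := hk
    refine ⟨Polynomial.aeval t (Polynomial.C c * Polynomial.X ^ k) • w + r ᵥ* A, ?_⟩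
    rw [pow_succ, ← mul_assoc, map_mul, Polynomial.aeval_X, ← vecMul_vecMul, hr, add_vecMul,
      smul_vecMul, smul_vecMul, h]
    simp only [map_mul, Polynomial.aeval_X]
    module

lemma vecMul_companionMatrix {S : Type*} [CommRing S] [Algebra ℂ S] (f : Polynomial ℂ) (t : S) :
    powVec f.natDegree t ᵥ* (companionMatrix f).map (algebraMap ℂ S) =
      t • powVec f.natDegree t + Polynomial.aeval t f • fun j : Fin f.natDegree =>
        if (j : ℕ) = f.natDegree - 1 then -algebraMap ℂ S f.leadingCoeff⁻¹ else 0 := by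
  ext j
  have hf : f.leadingCoeff ≠ 0 :=
    Polynomial.leadingCoeff_ne_zero.2 (Polynomial.ne_zero_of_natDegree_gt j.pos)
  simp only [vecMul, dotProduct, powVec, companionMatrix, map_apply, of_apply, Pi.add_apply,
    Pi.smul_apply, smul_eq_mul]
  split_ifs with hj
  · have hsum : Polynomial.aeval t f =
        ∑ i : Fin f.natDegree, t ^ (i : ℕ) * algebraMap ℂ S (f.coeff i) +
          algebraMap ℂ S f.leadingCoeff * t ^ f.natDegree := by
      rw [Polynomial.aeval_eq_sum_range, sum_range_succ, Polynomial.coeff_natDegree,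
        Fin.sum_univ_eq_sum_range (fun i => t ^ i * algebraMap ℂ S (f.coeff i))]
      simp only [Algebra.smul_def, mul_comm]
    have hpow : t * t ^ (j : ℕ) = t ^ f.natDegree := by
      rw [← pow_succ', hj, Nat.sub_add_cancel j.pos]
    have hinv : algebraMap ℂ S f.leadingCoeff * algebraMap ℂ S f.leadingCoeff⁻¹ = 1 := by
      rw [← map_mul, mul_inv_cancel₀ hf, map_one]
    have hcol : ∑ i : Fin f.natDegree, t ^ (i : ℕ) * algebraMap ℂ S (-f.coeff i / f.leadingCoeff) =
        -(∑ i : Fin f.natDegree, t ^ (i : ℕ) * algebraMap ℂ S (f.coeff i)) *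
          algebraMap ℂ S f.leadingCoeff⁻¹ := by
      rw [neg_mul, sum_mul, ← sum_neg_distrib]
      refine sum_congr rfl fun i _ => ?_
      rw [div_eq_mul_inv, map_mul, map_neg]
      ring
    rw [hcol, hsum, hpow]
    linear_combination t ^ f.natDegree * hinv
  · rw [sum_eq_single ⟨j + 1, by omega⟩]
    · simp [pow_succ']
    · intro i _ hi
      rw [if_neg (fun h => hi (Fin.ext h)), map_zero, mul_zero]
    · simp

lemma aeval_X_dvd_bilinearPoly_aeval_companionMatrix_mul_sub (f g : Polynomial ℂ)
    (B : Matrix (Fin f.natDegree) (Fin f.natDegree) ℂ) :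
    Polynomial.aeval (X 0) f ∣
      bilinearPoly (Polynomial.aeval (companionMatrix f) g * B) -
        Polynomial.aeval (X 0) g * bilinearPoly B := by
  obtain ⟨r, hr⟩ :=
    exists_vecMul_aeval_eq (vecMul_companionMatrix f (X 0 : MvPolynomial (Fin 2) ℂ)) g
  have hmap : (Polynomial.aeval (companionMatrix f) g).map (algebraMap ℂ (MvPolynomial (Fin 2) ℂ)) =
      Polynomial.aeval ((companionMatrix f).map (algebraMap ℂ _)) g :=
    (Polynomial.aeval_algHom_apply (Algebra.ofId ℂ _).mapMatrix _ g).symm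
  refine ⟨r ⬝ᵥ (B.map (algebraMap ℂ _) *ᵥ powVec _ (X 1)), ?_⟩
  rw [bilinearPoly_eq_dotProduct, bilinearPoly_eq_dotProduct, Matrix.map_mul, hmap,
    ← mulVec_mulVec, dotProduct_mulVec, hr, add_dotProduct, smul_dotProduct, smul_dotProduct,
    smul_eq_mul, smul_eq_mul, add_sub_cancel_left]

theorem barnett_formula_generalized_general (f g : Polynomial ℂ)
    (hg : g.natDegree ≤ f.natDegree)
    (δ1 δg : MvPolynomial (Fin 2) ℂ)
    (hδ1 : (X 0 - X 1) * δ1 = Polynomial.aeval (X 0) f - Polynomial.aeval (X 1) f)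
    (hδg : (X 0 - X 1) * δg =
      Polynomial.aeval (X 0) f * Polynomial.aeval (X 1) g -
        Polynomial.aeval (X 1) f * Polynomial.aeval (X 0) g)
    (B1 Bg : Matrix (Fin f.natDegree) (Fin f.natDegree) ℂ)
    (hB1 : δ1 = ∑ α : Fin f.natDegree, ∑ β : Fin f.natDegree,
      MvPolynomial.C (B1 α β) * X 0 ^ (α : ℕ) * X 1 ^ (β : ℕ))
    (hBg : δg = ∑ α : Fin f.natDegree, ∑ β : Fin f.natDegree,
      MvPolynomial.C (Bg α β) * X 0 ^ (α : ℕ) * X 1 ^ (β : ℕ)) :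
    Bg * B1⁻¹ = Polynomial.aeval (companionMatrix f) g := by
  rcases Nat.eq_zero_or_pos f.natDegree with hd | hd
  · ext i
    exact absurd i.isLt (by omega)
  change δ1 = bilinearPoly B1 at hB1
  change δg = bilinearPoly Bg at hBg
  have hf : f ≠ 0 := Polynomial.ne_zero_of_natDegree_gt hd
  have hX : (X 0 - X 1 : MvPolynomial (Fin 2) ℂ) ≠ 0 := sub_ne_zero.2 (X_injective.ne (by decide))
  have hB1_hankel : B1 = hankel f f.natDegree :=
    bilinearPoly_injective (mul_left_cancel₀ hX (by rw [← hB1, hδ1, aeval_X_sub_aeval_X f le_rfl]))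
  have hB1_unit : IsUnit B1.det :=
    hB1_hankel ▸ isUnit_det_hankel (Polynomial.leadingCoeff_ne_zero.2 hf).isUnit
  have hquot : Polynomial.aeval (X 0) g * δ1 - δg =
      Polynomial.aeval (X 0) f * bilinearPoly (hankel g f.natDegree) := by
    refine mul_left_cancel₀ hX ?_
    linear_combination Polynomial.aeval (X 0) g * hδ1 - hδg +
      Polynomial.aeval (X 0) f * aeval_X_sub_aeval_X g hg
  suffices Bg = Polynomial.aeval (companionMatrix f) g * B1 by
    rw [this, Matrix.mul_assoc, mul_nonsing_inv _ hB1_unit, Matrix.mul_one]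
  refine (sub_eq_zero.1 (eq_zero_of_aeval_X_dvd_bilinearPoly hf le_rfl ?_)).symm
  rw [bilinearPoly_sub, ← hBg, ← sub_add_sub_cancel _ (Polynomial.aeval (X 0) g * δ1), hquot, hB1]
  exact dvd_add (aeval_X_dvd_bilinearPoly_aeval_companionMatrix_mul_sub f g B1) (dvd_mul_right _ _)

/-- Generalized Barnett formula: for `g` of degree at most `d = deg f`,
`B(g)·B(1)⁻¹ = g(X)`, where the Bezout matrices are indexed by `0,…,d−1`. -/
theorem barnett_formula_generalized (f g : Polynomial ℂ) (hf : f.leadingCoeff ≠ 0)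
    (hg : g.natDegree ≤ f.natDegree)
    (δ1 δg : MvPolynomial (Fin 2) ℂ)
    (hδ1 : (X 0 - X 1) * δ1 = Polynomial.aeval (X 0) f - Polynomial.aeval (X 1) f)
    (hδg : (X 0 - X 1) * δg =
      Polynomial.aeval (X 0) f * Polynomial.aeval (X 1) g -
        Polynomial.aeval (X 1) f * Polynomial.aeval (X 0) g)
    (B1 Bg : Matrix (Fin f.natDegree) (Fin f.natDegree) ℂ)
    (hB1 : δ1 = ∑ α : Fin f.natDegree, ∑ β : Fin f.natDegree,
      MvPolynomial.C (B1 α β) * X 0 ^ (α : ℕ) * X 1 ^ (β : ℕ))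
    (hBg : δg = ∑ α : Fin f.natDegree, ∑ β : Fin f.natDegree,
      MvPolynomial.C (Bg α β) * X 0 ^ (α : ℕ) * X 1 ^ (β : ℕ)) :
    Bg * B1⁻¹ = Polynomial.aeval (companionMatrix f) g :=
  barnett_formula_generalized_general f g hg δ1 δg hδ1 hδg B1 Bg hB1 hBg
end

section
/- For a monic polynomial f of degree d with Bezout matrices B(1), B(x) of size d, the matrix B(1)^{-1}·B(x) represents the multiplication-by-x operator on ℂ[x]/⟨f⟩ in the Horner basis, and is similar to the companion matrix X via conjugation by B(1). -/
open MvPolynomial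

/-- The `k`-th Horner polynomial of `f` (the `k`-th column of `B(1)` read in the
monomial basis). -/
noncomputable def hornerPoly (f : Polynomial ℂ) (k : Fin f.natDegree) : Polynomial ℂ :=
  ∑ j : Fin f.natDegree,
    Polynomial.C (f.coeff ((k : ℕ) + (j : ℕ) + 1)) * Polynomial.X ^ (j : ℕ)

/-!
Write `H = (f_{α+β+1})` for the Hankel matrix whose columns are the Horner polynomials, `C` for
the companion matrix and `v(s) = (s^α)_α`. Then `v(s)ᵀ C = s v(s)ᵀ - f(s) e_{d-1}ᵀ`, and the last
entry of `H v(t)` is `1`, so `v(s)ᵀ (C H) v(t) = s v(s)ᵀ H v(t) - f(s)`. Both `H` and `C H` are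
symmetric, so the same value is also `t v(s)ᵀ H v(t) - f(t)`; hence
`(s - t) v(s)ᵀ H v(t) = f(s) - f(t)` and `(s - t) v(s)ᵀ (C H) v(t) = f(s) t - f(t) s`, and
comparing coefficients gives `B(1) = H` and `B(x) = C H`. Finally, `C` is the matrix of
multiplication by `x` in the monomial basis of `ℂ[x]/⟨f⟩` and `H` is the change of basis from the
Horner basis to it, so in the Horner basis that multiplication has matrix `H⁻¹ C H = B(1)⁻¹ B(x)`.
-/

open Matrix

lemma Fin.sum_ite_val_eq {M : Type*} [AddCommMonoid M] (n k : ℕ) (g : ℕ → M) :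
    ∑ i : Fin n, (if (i : ℕ) = k then g i else 0) = if k < n then g k else 0 := by
  rw [Fin.sum_univ_eq_sum_range (fun i => if i = k then g i else 0), Finset.sum_ite_eq']
  simp only [Finset.mem_range]

lemma Polynomial.Monic.coeff_add_natDegree {R : Type*} [Semiring R] {f : Polynomial R}
    (hf : f.Monic) (n : ℕ) :
    f.coeff (n + f.natDegree) = if n = 0 then 1 else 0 := by
  split_ifs with hn
  · rw [hn, zero_add, hf.coeff_natDegree]
  · exact Polynomial.coeff_eq_zero_of_natDegree_lt (by omega)

section BivariateForm

variable {R A : Type*} [CommRing R] [CommRing A] [Algebra R A] {d : ℕ}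

def powerVec (s : A) : Fin d → A := fun α => s ^ (α : ℕ)

/-- For the Bezout matrix `B(g)` of `f` this is the Bezoutian
`(f(s) g(t) - f(t) g(s)) / (s - t)`. -/
def bivariateForm (M : Matrix (Fin d) (Fin d) R) (s t : A) : A :=
  ∑ α : Fin d, ∑ β : Fin d, algebraMap R A (M α β) * s ^ (α : ℕ) * t ^ (β : ℕ)

lemma bivariateForm_eq_dotProduct (M : Matrix (Fin d) (Fin d) R) (s t : A) :
    bivariateForm M s t = powerVec s ⬝ᵥ (M.map (algebraMap R A) *ᵥ powerVec t) := by
  simp only [bivariateForm, dotProduct, mulVec, powerVec, map_apply, Finset.mul_sum]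
  exact Finset.sum_congr rfl fun α _ => Finset.sum_congr rfl fun β _ => by ring

lemma bivariateForm_transpose (M : Matrix (Fin d) (Fin d) R) (s t : A) :
    bivariateForm Mᵀ s t = bivariateForm M t s := by
  rw [bivariateForm, Finset.sum_comm]
  exact Finset.sum_congr rfl fun α _ => Finset.sum_congr rfl fun β _ => by
    rw [transpose_apply]; ring

lemma coeff_bivariateForm_X [Nontrivial R] (M : Matrix (Fin d) (Fin d) R) (a b : Fin d) :
    coeff (Finsupp.single 0 (a : ℕ) + Finsupp.single 1 (b : ℕ))
      (bivariateForm M (X 0 : MvPolynomial (Fin 2) R) (X 1)) = M a b := by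
  have hexp : ∀ α β : Fin d, (Finsupp.single (0 : Fin 2) (α : ℕ) + Finsupp.single 1 (β : ℕ) =
      Finsupp.single 0 (a : ℕ) + Finsupp.single 1 (b : ℕ)) ↔ α = a ∧ β = b := by
    refine fun α β => ⟨fun h => ?_, by rintro ⟨rfl, rfl⟩; rfl⟩
    have h0 := DFunLike.congr_fun h 0
    have h1 := DFunLike.congr_fun h 1
    simp only [Finsupp.coe_add, Pi.add_apply, Finsupp.single_eq_same, ne_eq, zero_ne_one,
      one_ne_zero, not_false_eq_true, Finsupp.single_eq_of_ne, add_zero, zero_add] at h0 h1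
    exact ⟨Fin.ext h0, Fin.ext h1⟩
  simp only [bivariateForm, coeff_sum, algebraMap_eq, mul_assoc, X_pow_eq_monomial, monomial_mul,
    one_mul, coeff_C_mul, coeff_monomial, hexp]
  simp [ite_and]

lemma bivariateForm_X_injective [Nontrivial R] :
    Function.Injective (fun M : Matrix (Fin d) (Fin d) R =>
      bivariateForm M (X 0 : MvPolynomial (Fin 2) R) (X 1)) := fun M N h =>
  Matrix.ext fun a b => by
    rw [← coeff_bivariateForm_X M, ← coeff_bivariateForm_X N]
    exact congrArg _ h

lemma eq_of_sub_mul_bivariateForm_eq [IsDomain R] {M N : Matrix (Fin d) (Fin d) R}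
    (h : (X 0 - X 1) * bivariateForm M (X 0 : MvPolynomial (Fin 2) R) (X 1) =
      (X 0 - X 1) * bivariateForm N (X 0 : MvPolynomial (Fin 2) R) (X 1)) : M = N :=
  bivariateForm_X_injective <| mul_left_cancel₀ (sub_ne_zero.mpr <| X_injective.ne (by decide)) h

end BivariateForm

noncomputable def hornerMatrix (f : Polynomial ℂ) : Matrix (Fin f.natDegree) (Fin f.natDegree) ℂ :=
  Matrix.of fun α β => f.coeff (α + β + 1)

section HornerMatrix

variable (f : Polynomial ℂ)
variable {A : Type*} [CommRing A] [Algebra ℂ A]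

lemma hornerMatrix_transpose : (hornerMatrix f)ᵀ = hornerMatrix f := by
  ext α β
  simp only [transpose_apply, hornerMatrix, of_apply, add_comm (β : ℕ)]

lemma hornerMatrix_mulVec_powerVec (t : A) (k : Fin f.natDegree) :
    ((hornerMatrix f).map (algebraMap ℂ A) *ᵥ powerVec t) k =
      Polynomial.aeval t (hornerPoly f k) := by
  simp [mulVec, dotProduct, hornerPoly, hornerMatrix, powerVec]

lemma hornerPoly_last_eq_one (hf : f.Monic) (hd : 1 ≤ f.natDegree) :
    hornerPoly f ⟨f.natDegree - 1, by omega⟩ = 1 := by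
  rw [hornerPoly, Fintype.sum_eq_single ⟨0, hd⟩]
  · simp [Nat.sub_add_cancel hd, hf.coeff_natDegree]
  · intro j hj
    have : (j : ℕ) ≠ 0 := fun h => hj (Fin.ext h)
    rw [Polynomial.coeff_eq_zero_of_natDegree_lt (by simp only; omega), map_zero, zero_mul]

lemma companionMatrix_apply_of_monic (hf : f.Monic) (i j : Fin f.natDegree) :
    companionMatrix f i j =
      (if (i : ℕ) = j + 1 then 1 else 0) - if (j : ℕ) = f.natDegree - 1 then f.coeff i else 0 := by
  simp only [companionMatrix, of_apply, hf.leadingCoeff, div_one]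
  split_ifs <;> first | (have := i.isLt; omega) | ring

lemma companionMatrix_mul_hornerMatrix_apply (hf : f.Monic) (i β : Fin f.natDegree) :
    (companionMatrix f * hornerMatrix f) i β =
      (if (i : ℕ) = 0 then 0 else f.coeff (i + β)) - if (β : ℕ) = 0 then f.coeff i else 0 := by
  have hshift : ∑ j : Fin f.natDegree, (if (i : ℕ) = j + 1 then f.coeff (j + β + 1) else 0) =
      if (i : ℕ) = 0 then 0 else f.coeff (i + β) := by
    split_ifs with hi
    · exact Finset.sum_eq_zero fun j _ => if_neg (by omega)
    · rw [Fintype.sum_eq_single ⟨i - 1, (Nat.sub_le _ _).trans_lt i.isLt⟩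
          fun j hj => if_neg fun h => hj (Fin.ext (by simp only; omega)),
        if_pos (by simp only; omega)]
      congr 1
      simp only
      omega
  have hlast : ∑ j : Fin f.natDegree,
      (if (j : ℕ) = f.natDegree - 1 then f.coeff i * f.coeff (j + β + 1) else 0) =
      if (β : ℕ) = 0 then f.coeff i else 0 := by
    rw [Fin.sum_ite_val_eq _ _ fun j => f.coeff i * f.coeff (j + β + 1),
      if_pos (Nat.sub_one_lt_of_lt i.isLt),
      show f.natDegree - 1 + β + 1 = β + f.natDegree by omega, hf.coeff_add_natDegree]
    simp
  simp only [mul_apply, companionMatrix_apply_of_monic f hf, hornerMatrix, of_apply, sub_mul,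
    ite_mul, one_mul, zero_mul, Finset.sum_sub_distrib, hshift, hlast]

lemma companionMatrix_mul_hornerMatrix_transpose (hf : f.Monic) :
    (companionMatrix f * hornerMatrix f)ᵀ = companionMatrix f * hornerMatrix f := by
  ext i β
  rw [transpose_apply, companionMatrix_mul_hornerMatrix_apply f hf,
    companionMatrix_mul_hornerMatrix_apply f hf, add_comm (β : ℕ)]
  split_ifs <;> simp_all

lemma powerVec_vecMul_companionMatrix (hf : f.Monic) (hd : 1 ≤ f.natDegree) (s : A) :
    powerVec s ᵥ* (companionMatrix f).map (algebraMap ℂ A) =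
      s • powerVec s - Pi.single ⟨f.natDegree - 1, by omega⟩ (Polynomial.aeval s f) := by
  ext j
  have haeval : Polynomial.aeval s f =
      s ^ f.natDegree + ∑ i : Fin f.natDegree, algebraMap ℂ A (f.coeff i) * s ^ (i : ℕ) := by
    conv_lhs => rw [hf.as_sum]
    simp [Fin.sum_univ_eq_sum_range (fun i => algebraMap ℂ A (f.coeff i) * s ^ i)]
  simp only [vecMul, dotProduct, powerVec, map_apply, companionMatrix_apply_of_monic f hf, map_sub,
    mul_sub, Finset.sum_sub_distrib, apply_ite (algebraMap ℂ A), map_one, map_zero, mul_ite,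
    mul_one, mul_zero, Fin.sum_ite_val_eq, Pi.sub_apply, Pi.smul_apply, smul_eq_mul,
    Pi.single_apply, Fin.ext_iff]
  have hj := j.isLt
  by_cases hlast : (j : ℕ) = f.natDegree - 1
  · simp only [hlast, if_true, show ¬ f.natDegree - 1 + 1 < f.natDegree by omega, if_false, haeval]
    rw [← pow_succ', Nat.sub_add_cancel hd]
    simp only [mul_comm (s ^ _)]
    ring
  · simp only [hlast, if_false, show (j : ℕ) + 1 < f.natDegree by omega, if_true,
      Finset.sum_const_zero, sub_zero, pow_succ']

lemma bivariateForm_companionMatrix_mul_hornerMatrix (hf : f.Monic) (hd : 1 ≤ f.natDegree)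
    (s t : A) :
    bivariateForm (companionMatrix f * hornerMatrix f) s t =
      s * bivariateForm (hornerMatrix f) s t - Polynomial.aeval s f := by
  rw [bivariateForm_eq_dotProduct, bivariateForm_eq_dotProduct, Matrix.map_mul, ← mulVec_mulVec,
    dotProduct_mulVec, powerVec_vecMul_companionMatrix f hf hd, sub_dotProduct, smul_dotProduct,
    single_dotProduct, hornerMatrix_mulVec_powerVec, hornerPoly_last_eq_one f hf hd, map_one,
    mul_one, smul_eq_mul]

lemma sub_mul_bivariateForm_hornerMatrix (hf : f.Monic) (hd : 1 ≤ f.natDegree) (s t : A) :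
    (s - t) * bivariateForm (hornerMatrix f) s t =
      Polynomial.aeval s f - Polynomial.aeval t f := by
  have hs := bivariateForm_companionMatrix_mul_hornerMatrix f hf hd s t
  have ht := bivariateForm_companionMatrix_mul_hornerMatrix f hf hd t s
  -- `H` and `C * H` are symmetric, so swapping `s` and `t` evaluates the same form a second way.
  rw [← bivariateForm_transpose, companionMatrix_mul_hornerMatrix_transpose f hf,
    ← bivariateForm_transpose (hornerMatrix f), hornerMatrix_transpose] at ht
  linear_combination ht - hs

lemma sub_mul_bivariateForm_companionMatrix_mul_hornerMatrix (hf : f.Monic)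
    (hd : 1 ≤ f.natDegree) (s t : A) :
    (s - t) * bivariateForm (companionMatrix f * hornerMatrix f) s t =
      Polynomial.aeval s f * t - Polynomial.aeval t f * s := by
  rw [bivariateForm_companionMatrix_mul_hornerMatrix f hf hd]
  linear_combination s * sub_mul_bivariateForm_hornerMatrix f hf hd s t

/-- `(AdjoinRoot.powerBasis' hf).basis` with its index type `Fin (powerBasis' hf).dim` restated
as the defeq `Fin f.natDegree`, so that matrices in it multiply with `companionMatrix f`. -/
noncomputable def monomialBasis (hf : f.Monic) : Module.Basis (Fin f.natDegree) ℂ (AdjoinRoot f) :=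
  (AdjoinRoot.powerBasis' hf).basis

lemma monomialBasis_apply (hf : f.Monic) (i : Fin f.natDegree) :
    monomialBasis f hf i = AdjoinRoot.root f ^ (i : ℕ) :=
  (AdjoinRoot.powerBasis' hf).basis_eq_pow i

lemma toMatrix_monomialBasis_mulLeft_root (hf : f.Monic) :
    LinearMap.toMatrix (monomialBasis f hf) (monomialBasis f hf)
      (LinearMap.mulLeft ℂ (AdjoinRoot.root f)) = companionMatrix f := by
  have h := (AdjoinRoot.powerBasis' hf).leftMulMatrix
  rw [Algebra.leftMulMatrix_apply, PowerBasis.minpolyGen_eq, AdjoinRoot.powerBasis'_gen,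
    AdjoinRoot.minpoly_root hf.ne_zero, hf.leadingCoeff, inv_one, map_one, mul_one] at h
  refine h.trans (ext fun i j => ?_)
  have hj := j.isLt
  simp only [companionMatrix, of_apply, hf.leadingCoeff, div_one,
    AdjoinRoot.powerBasis'_dim] at hj ⊢
  simp only [show (j : ℕ) + 1 = f.natDegree ↔ (j : ℕ) = f.natDegree - 1 by omega]
  rfl

lemma monomialBasis_toMatrix_hornerPoly (hf : f.Monic) :
    (monomialBasis f hf).toMatrix (fun k => AdjoinRoot.mk f (hornerPoly f k)) = hornerMatrix f := by
  ext i k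
  have hk : AdjoinRoot.mk f (hornerPoly f k) = ∑ β, hornerMatrix f β k • monomialBasis f hf β := by
    rw [← AdjoinRoot.aeval_eq, ← hornerMatrix_mulVec_powerVec]
    simp only [mulVec, dotProduct, powerVec, map_apply, monomialBasis_apply, Algebra.smul_def]
    exact Finset.sum_congr rfl fun β _ => by simp only [hornerMatrix, of_apply, add_comm (k : ℕ)]
  rw [Module.Basis.toMatrix_apply, hk, Module.Basis.repr_sum_self]

end HornerMatrix

/-- For a monic `f` of degree `d`, `B(1)⁻¹·B(x)` is the matrix of the
multiplication-by-`x` operator on `ℂ[x]/⟨f⟩` in the Horner basis, and it is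
similar to the companion matrix `X` via conjugation by `B(1)`:
`X = B(1)·(B(1)⁻¹B(x))·B(1)⁻¹`. -/
theorem barnett_horner_basis (f : Polynomial ℂ) (hf : f.Monic) (hd : 1 ≤ f.natDegree)
    (δ1 δx : MvPolynomial (Fin 2) ℂ)
    (hδ1 : (X 0 - X 1) * δ1 = Polynomial.aeval (X 0) f - Polynomial.aeval (X 1) f)
    (hδx : (X 0 - X 1) * δx =
      Polynomial.aeval (X 0) f * X 1 - Polynomial.aeval (X 1) f * X 0)
    (B1 Bx : Matrix (Fin f.natDegree) (Fin f.natDegree) ℂ)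
    (hB1 : δ1 = ∑ α : Fin f.natDegree, ∑ β : Fin f.natDegree,
      MvPolynomial.C (B1 α β) * X 0 ^ (α : ℕ) * X 1 ^ (β : ℕ))
    (hBx : δx = ∑ α : Fin f.natDegree, ∑ β : Fin f.natDegree,
      MvPolynomial.C (Bx α β) * X 0 ^ (α : ℕ) * X 1 ^ (β : ℕ))
    (b : Module.Basis (Fin f.natDegree) ℂ (AdjoinRoot f))
    (hb : ∀ k, b k = AdjoinRoot.mk f (hornerPoly f k)) :
    LinearMap.toMatrix b b (LinearMap.mulLeft ℂ (AdjoinRoot.root f)) = B1⁻¹ * Bx ∧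
      companionMatrix f = B1 * (B1⁻¹ * Bx) * B1⁻¹ := by
  have hB1H : B1 = hornerMatrix f := eq_of_sub_mul_bivariateForm_eq <| by
    rw [sub_mul_bivariateForm_hornerMatrix f hf hd, ← hδ1, hB1, bivariateForm, algebraMap_eq]
  have hBxCH : Bx = companionMatrix f * hornerMatrix f := eq_of_sub_mul_bivariateForm_eq <| by
    rw [sub_mul_bivariateForm_companionMatrix_mul_hornerMatrix f hf hd, ← hδx, hBx, bivariateForm,
      algebraMap_eq]
  subst hB1H hBxCH
  set p := monomialBasis f hf
  have hpb : p.toMatrix b = hornerMatrix f := by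
    rw [← monomialBasis_toMatrix_hornerPoly f hf]
    exact congrArg _ (funext hb)
  have hbp : b.toMatrix p * hornerMatrix f = 1 := hpb ▸ b.toMatrix_mul_toMatrix_flip p
  have hdet : IsUnit (hornerMatrix f).det := isUnit_det_of_left_inverse hbp
  refine ⟨?_, by rw [mul_nonsing_inv_cancel_left _ _ hdet, mul_nonsing_inv_cancel_right _ _ hdet]⟩
  rw [← basis_toMatrix_mul_linearMap_toMatrix_mul_basis_toMatrix b p b p,
    toMatrix_monomialBasis_mulLeft_root f hf, hpb, inv_eq_left_inv hbp, Matrix.mul_assoc]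
end
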